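/- For every ε > 0 there exists T = O(polylog(1/ε)) such that for every n > 0 there exist functions α₁,…,α_T : (1,2) → ℝ and β₁,…,β_T : (0,1) → ℝ with |exp(−n·E(p||q)) − Σ_{i=1}^{T} α_i(p)·β_i(q)| ≤ ε for all (p,q) ∈ (1,2) × (0,1), where E(p||q) = p·ln(p/q) − (p−q). -/

import Mathlib

noncomputable def E (p q : ℝ) : ℝ := p * Real.log (p / q) - (p - q)

/-!
Write `E p q = E p 1 + E 1 q - (p - 1) log q`. Then `exp (-n E p q)` is the product of a function
of `p`, a function of `q`, and `exp (n (p - 1) log q)`, whose Taylor polynomial is a separated sum.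
Its exponent is at most `n u w` whenever `p - 1 ≤ u` and `-log q ≤ w`; outside this box the factor
`exp (-n E p 1)` or `exp (-n E 1 q)` is already below `ε = exp (-L)`, so the approximation may
vanish there. Since `E p 1 ≳ (p - 1)²` and `E 1 q ≳ (1 - q)²`, the box can be chosen with
`n u w = O(L)` for every `n` (`u = w = √(8 L / n)` for large `n`, `u = 1`, `w = 1 + L / n` for
`n ≤ 8 L`), and `O(L)` Taylor terms suffice.
-/

open Real Finset Set Nat

def HasSeparatedApprox {X Y : Type*} (f : X → Y → ℝ) (s : Set X) (t : Set Y) (T : ℕ) (ε : ℝ) :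
    Prop :=
  ∃ α : Fin T → X → ℝ, ∃ β : Fin T → Y → ℝ, ∀ x ∈ s, ∀ y ∈ t, |f x y - ∑ i, α i x * β i y| ≤ ε

namespace HasSeparatedApprox

variable {X Y : Type*} {f g : X → Y → ℝ} {s s' : Set X} {t t' : Set Y} {T : ℕ} {ε δ : ℝ}

theorem mono (hf : HasSeparatedApprox f s t T ε) (hεδ : ε ≤ δ) :
    HasSeparatedApprox f s t T δ := by
  obtain ⟨α, β, h⟩ := hf
  exact ⟨α, β, fun x hx y hy => (h x hx y hy).trans hεδ⟩

theorem congr (hf : HasSeparatedApprox f s t T ε) (hfg : ∀ x ∈ s, ∀ y ∈ t, f x y = g x y) :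
    HasSeparatedApprox g s t T ε := by
  obtain ⟨α, β, h⟩ := hf
  exact ⟨α, β, fun x hx y hy => hfg x hx y hy ▸ h x hx y hy⟩

theorem mul_mul (hf : HasSeparatedApprox f s t T ε) {a : X → ℝ} {b : Y → ℝ}
    (ha : ∀ x ∈ s, |a x| ≤ 1) (hb : ∀ y ∈ t, |b y| ≤ 1) :
    HasSeparatedApprox (fun x y => a x * b y * f x y) s t T ε := by
  obtain ⟨α, β, h⟩ := hf
  refine ⟨fun i x => a x * α i x, fun i y => b y * β i y, fun x hx y hy => ?_⟩
  have hsum : ∑ i, a x * α i x * (b y * β i y) = a x * b y * ∑ i, α i x * β i y := by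
    rw [mul_sum]
    exact sum_congr rfl fun i _ => by ring
  calc |a x * b y * f x y - ∑ i, a x * α i x * (b y * β i y)|
      = |a x| * |b y| * |f x y - ∑ i, α i x * β i y| := by rw [hsum, ← mul_sub, abs_mul, abs_mul]
    _ ≤ 1 * 1 * ε := by gcongr; exacts [ha x hx, hb y hy, h x hx y hy]
    _ = ε := by ring

theorem of_inter (hf : HasSeparatedApprox f (s ∩ s') (t ∩ t') T ε)
    (hs : ∀ x ∈ s, x ∉ s' → ∀ y ∈ t, |f x y| ≤ ε)
    (ht : ∀ x ∈ s, ∀ y ∈ t, y ∉ t' → |f x y| ≤ ε) :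
    HasSeparatedApprox f s t T ε := by
  obtain ⟨α, β, h⟩ := hf
  refine ⟨fun i => s'.indicator (α i), fun i => t'.indicator (β i), fun x hx y hy => ?_⟩
  by_cases hx' : x ∈ s'
  · by_cases hy' : y ∈ t'
    · simpa only [indicator_of_mem hx', indicator_of_mem hy'] using h x ⟨hx, hx'⟩ y ⟨hy, hy'⟩
    · simpa only [indicator_of_notMem hy', mul_zero, sum_const_zero, sub_zero] using
        ht x hx y hy hy'
  · simpa only [indicator_of_notMem hx', zero_mul, sum_const_zero, sub_zero] using
      hs x hx hx' y hy

/-- For `2 B ≤ T + 1` the omitted terms of the exponential series decay at least geometrically with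
ratio `1 / 2`. -/
theorem exp_mul {a : X → ℝ} {b : Y → ℝ} {B : ℝ} (hab : ∀ x ∈ s, ∀ y ∈ t, |a x * b y| ≤ B)
    (hT : 2 * B ≤ T + 1) :
    HasSeparatedApprox (fun x y => exp (a x * b y)) s t T (B ^ T / T ! * 2) := by
  refine ⟨fun i x => a x ^ (i : ℕ) / (i : ℕ)!, fun i y => b y ^ (i : ℕ), fun x hx y hy => ?_⟩
  have hsum : ∑ i : Fin T, a x ^ (i : ℕ) / (i : ℕ)! * b y ^ (i : ℕ)
      = ∑ m ∈ range T, (a x * b y) ^ m / m ! := by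
    rw [Fin.sum_univ_eq_sum_range (fun m => a x ^ m / m ! * b y ^ m)]
    exact sum_congr rfl fun m _ => by ring
  have hradius : ‖((a x * b y : ℝ) : ℂ)‖ / T.succ ≤ 1 / 2 := by
    rw [Complex.norm_real, norm_eq_abs, div_le_iff₀ (by positivity)]
    push_cast
    linarith [hab x hx y hy]
  calc |exp (a x * b y) - ∑ i : Fin T, a x ^ (i : ℕ) / (i : ℕ)! * b y ^ (i : ℕ)|
      ≤ |a x * b y| ^ T / T ! * 2 := by rw [hsum]; exact_mod_cast Complex.exp_bound' hradius
    _ ≤ B ^ T / T ! * 2 := by gcongr; exact hab x hx y hy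

end HasSeparatedApprox

theorem pow_div_factorial_mul_two_le_exp_neg {B L : ℝ} {T : ℕ} (hB : 0 ≤ B)
    (hBT : exp 2 * B ≤ T) (hLT : L + 1 ≤ T) : B ^ T / T ! * 2 ≤ exp (-L) := by
  have hB' : B ≤ exp (-2) * T := by
    rw [exp_neg, inv_mul_eq_div, le_div_iff₀ (exp_pos 2)]
    linarith
  calc B ^ T / T ! * 2 ≤ (exp (-2) * T) ^ T / T ! * exp 1 := by
        gcongr
        linarith [exp_one_gt_d9]
    _ = exp (-2) ^ T * ((T : ℝ) ^ T / T !) * exp 1 := by rw [mul_pow]; ring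
    _ ≤ exp (-2) ^ T * exp T * exp 1 := by
        gcongr
        exact pow_div_factorial_le_exp _ (by positivity) T
    _ = exp (1 - T) := by rw [← exp_nat_mul, ← exp_add, ← exp_add]; ring_nf
    _ ≤ exp (-L) := exp_le_exp.2 (by linarith)

theorem add_sq_div_two_le_neg_log_one_sub {x : ℝ} (hx0 : 0 ≤ x) (hx1 : x < 1) :
    x + x ^ 2 / 2 ≤ -log (1 - x) := by
  have h := sum_le_hasSum (range 2) (fun i _ => by positivity)
    (hasSum_pow_div_log_of_abs_lt_one (abs_lt.2 ⟨by linarith, hx1⟩))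
  norm_num [sum_range_succ] at h
  linarith

theorem E_nonneg {p q : ℝ} (hp : 0 < p) (hq : 0 < q) : 0 ≤ E p q := by
  have h := one_sub_inv_le_log_of_pos (div_pos hp hq)
  rw [inv_div] at h
  have : p * (1 - q / p) = p - q := by field_simp
  unfold E
  nlinarith

theorem E_eq_add_sub_mul_log {p q : ℝ} (hp : p ≠ 0) (hq : q ≠ 0) :
    E p q = E p 1 + E 1 q - (p - 1) * log q := by
  simp only [E, div_one, one_div, log_inv, log_div hp hq]
  ring

theorem E_one_left (q : ℝ) : E 1 q = -log q - (1 - q) := by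
  simp [E]

theorem sq_div_two_mul_le_E_one_right {p : ℝ} (hp : 1 ≤ p) : (p - 1) ^ 2 / (2 * p) ≤ E p 1 := by
  have hp0 : 0 < p := by linarith
  have h := add_sq_div_two_le_neg_log_one_sub (x := (p - 1) / p) (by positivity)
    (by rw [div_lt_one hp0]; linarith)
  rw [show 1 - (p - 1) / p = p⁻¹ by field_simp; ring, log_inv, neg_neg] at h
  simp only [E, div_one]
  have : p * ((p - 1) / p + ((p - 1) / p) ^ 2 / 2) = p - 1 + (p - 1) ^ 2 / (2 * p) := by
    field_simp
  nlinarith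

theorem sq_div_two_le_E_one_left {q : ℝ} (hq0 : 0 < q) (hq1 : q ≤ 1) : (1 - q) ^ 2 / 2 ≤ E 1 q := by
  have h := add_sq_div_two_le_neg_log_one_sub (x := 1 - q) (by linarith) (by linarith)
  rw [sub_sub_cancel] at h
  rw [E_one_left]
  linarith

theorem exp_neg_le_one_sub_half {x : ℝ} (hx0 : 0 ≤ x) (hx1 : x ≤ 1) : exp (-x) ≤ 1 - x / 2 := by
  have h := add_one_le_exp x
  have : exp (-x) * exp x = 1 := by rw [← exp_add, neg_add_cancel, exp_zero]
  nlinarith [exp_pos (-x)]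

theorem exists_cutoffs {n L : ℝ} (hn : 0 < n) (hL : 0 < L) :
    ∃ u w : ℝ, 0 ≤ u ∧ 0 ≤ w ∧ n * u * w ≤ 9 * L ∧
      (∀ p ∈ Ioo (1 : ℝ) 2, u < p - 1 → L ≤ n * E p 1) ∧
      (∀ q ∈ Ioo (0 : ℝ) 1, w < -log q → L ≤ n * E 1 q) := by
  rcases le_or_gt n (8 * L) with hnL | hnL
  · refine ⟨1, 1 + L / n, zero_le_one, by positivity, ?_, fun p hp hup => ?_, fun q hq hwq => ?_⟩
    · rw [mul_one, mul_add, mul_div_cancel₀ _ hn.ne']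
      linarith
    · linarith [hp.2]
    · rw [← div_le_iff₀' hn, E_one_left]
      linarith [hq.1]
  · set u := √(8 * L / n)
    have hu_sq : u * u = 8 * (L / n) := by rw [mul_self_sqrt (by positivity)]; ring
    have hu_le : u ≤ 1 := sqrt_le_one.2 ((div_le_one hn).2 hnL.le)
    have hLn : 0 < L / n := by positivity
    refine ⟨u, u, sqrt_nonneg _, sqrt_nonneg _, ?_, fun p hp hup => ?_, fun q hq huq => ?_⟩
    · rw [mul_assoc, hu_sq]
      field_simp
      linarith
    · have hE := sq_div_two_mul_le_E_one_right hp.1.le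
      have : (p - 1) ^ 2 / 4 ≤ (p - 1) ^ 2 / (2 * p) := by
        gcongr <;> linarith [hp.1, hp.2]
      have : u * u < (p - 1) ^ 2 := by nlinarith [sqrt_nonneg (8 * L / n)]
      rw [← div_le_iff₀' hn]
      linarith
    · have hq_le : q ≤ 1 - u / 2 := by
        calc q = exp (log q) := (exp_log hq.1).symm
          _ ≤ exp (-u) := exp_le_exp.2 (by linarith)
          _ ≤ 1 - u / 2 := exp_neg_le_one_sub_half (sqrt_nonneg _) hu_le
      have hE := sq_div_two_le_E_one_left hq.1 hq.2.le
      have : u * u / 4 ≤ (1 - q) ^ 2 := by nlinarith [sqrt_nonneg (8 * L / n)]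
      rw [← div_le_iff₀' hn]
      linarith

theorem hasSeparatedApprox_exp_neg_mul_E {n u w ε : ℝ} {T : ℕ} (hn : 0 < n) (hu : 0 ≤ u)
    (hGε : ∀ p ∈ Ioo (1 : ℝ) 2, u < p - 1 → exp (-n * E p 1) ≤ ε)
    (hHε : ∀ q ∈ Ioo (0 : ℝ) 1, w < -log q → exp (-n * E 1 q) ≤ ε)
    (hT : 2 * (n * u * w) ≤ T + 1) (hε : (n * u * w) ^ T / T ! * 2 ≤ ε) :
    HasSeparatedApprox (fun p q => exp (-n * E p q)) (Ioo 1 2) (Ioo 0 1) T ε := by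
  have hG : ∀ p ∈ Ioo (1 : ℝ) 2, |exp (-n * E p 1)| ≤ 1 := fun p hp => by
    rw [abs_exp, exp_le_one_iff]
    nlinarith [E_nonneg (by linarith [hp.1] : (0 : ℝ) < p) one_pos]
  have hH : ∀ q ∈ Ioo (0 : ℝ) 1, |exp (-n * E 1 q)| ≤ 1 := fun q hq => by
    rw [abs_exp, exp_le_one_iff]
    nlinarith [E_nonneg one_pos hq.1]
  have hK : ∀ p ∈ Ioo (1 : ℝ) 2, ∀ q ∈ Ioo (0 : ℝ) 1, |exp (n * (p - 1) * log q)| ≤ 1 :=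
    fun p hp q hq => by
      rw [abs_exp, exp_le_one_iff]
      exact mul_nonpos_of_nonneg_of_nonpos (by nlinarith [hp.1]) (log_nonpos hq.1.le hq.2.le)
  have hbox : ∀ p ∈ Ioo (1 : ℝ) 2 ∩ {p | p - 1 ≤ u}, ∀ q ∈ Ioo (0 : ℝ) 1 ∩ {q | -log q ≤ w},
      |n * (p - 1) * log q| ≤ n * u * w := fun p hp q hq => by
    rw [abs_mul, abs_of_nonneg (by nlinarith [hp.1.1]), abs_of_neg (log_neg hq.1.1 hq.1.2)]
    exact mul_le_mul (mul_le_mul_of_nonneg_left hp.2 hn.le) hq.2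
      (neg_nonneg.2 (log_nonpos hq.1.1.le hq.1.2.le)) (by positivity)
  have htaylor := ((HasSeparatedApprox.exp_mul (a := fun p => n * (p - 1)) hbox hT).mono hε).mul_mul
    (fun p hp => hG p hp.1) (fun q hq => hH q hq.1)
  refine (htaylor.of_inter (fun p hp hup q hq => ?_) (fun p hp q hq hwq => ?_)).congr ?_
  · rw [abs_mul, abs_mul]
    calc _ ≤ |exp (-n * E p 1)| * 1 * 1 := by gcongr; exacts [hH q hq, hK p hp q hq]
      _ ≤ ε := by rw [mul_one, mul_one, abs_exp]; exact hGε p hp (not_le.1 hup)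
  · rw [abs_mul, abs_mul]
    calc _ ≤ 1 * |exp (-n * E 1 q)| * 1 := by gcongr; exacts [hG p hp, hK p hp q hq]
      _ ≤ ε := by rw [mul_one, one_mul, abs_exp]; exact hHε q hq (not_le.1 hwq)
  · intro p hp q hq
    rw [E_eq_add_sub_mul_log (p := p) (q := q) (by linarith [hp.1]) hq.1.ne', ← exp_add, ← exp_add]
    ring_nf

theorem separated_approximation :
    ∃ C : ℝ, 0 < C ∧ ∃ k : ℕ, ∀ ε : ℝ, ε ∈ Set.Ioo (0:ℝ) 1 →
      ∃ T : ℕ, (T : ℝ) ≤ C * (1 + Real.log (1 / ε)) ^ k ∧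
        ∀ n : ℝ, 0 < n →
          ∃ α β : Fin T → ℝ → ℝ,
            ∀ p ∈ Set.Ioo (1:ℝ) 2, ∀ q ∈ Set.Ioo (0:ℝ) 1,
              |Real.exp (-n * E p q) - ∑ i, α i p * β i q| ≤ ε := by
  refine ⟨72, by norm_num, 1, fun ε hε => ?_⟩
  have hεL : exp (-log (1 / ε)) = ε := by rw [one_div, log_inv, neg_neg, exp_log hε.1]
  set L := log (1 / ε)
  have hL : 0 < L := log_pos (one_lt_one_div hε.1 hε.2)
  have hexp_two : exp 2 < 8 := by
    rw [show (2 : ℝ) = 1 + 1 by norm_num, exp_add]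
    nlinarith [exp_one_lt_d9, exp_pos 1]
  refine ⟨⌈72 * L⌉₊ + 1, ?_, fun n hn => ?_⟩
  · push_cast
    linarith [Nat.ceil_lt_add_one (by positivity : 0 ≤ 72 * L)]
  have hT : 72 * L + 1 ≤ ((⌈72 * L⌉₊ + 1 : ℕ) : ℝ) := by
    push_cast
    linarith [Nat.le_ceil (72 * L)]
  obtain ⟨u, w, hu, hw, huw, hpu, hqw⟩ := exists_cutoffs hn hL
  have hB : 0 ≤ n * u * w := by positivity
  have hBT : exp 2 * (n * u * w) ≤ 72 * L := by nlinarith [exp_pos 2]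
  have hcut : ∀ y, L ≤ n * y → exp (-n * y) ≤ ε := fun y hy => hεL ▸ exp_le_exp.2 (by linarith)
  exact hasSeparatedApprox_exp_neg_mul_E hn hu (fun p hp h => hcut _ (hpu p hp h))
    (fun q hq h => hcut _ (hqw q hq h)) (by nlinarith [add_one_le_exp 1])
    (hεL ▸ pow_div_factorial_mul_two_le_exp_neg hB (by linarith) (by linarith))
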